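/- If I is an ideal containing a regular element in a Noetherian ring R, then for all sufficiently large n, the power I^n is Ratliff-Rush closed, i.e., the Ratliff-Rush closure of I^n equals I^n. -/

import Mathlib

/-- The Ratliff–Rush closure of an ideal `I`: the union (supremum) of the increasing
chain of ideals `(I^{n+1} : I^n)` for `n ≥ 0`. -/
noncomputable def ratliffRushClosure {R : Type*} [CommRing R] (I : Ideal R) : Ideal R :=
  ⨆ n : ℕ, Submodule.colon (I ^ (n + 1)) ((I ^ n : Ideal R) : Set R)

/-!
Fix a regular element `r ∈ I`. By Artin–Rees applied to `rR`, dividing by `r` costs at most a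
fixed number `c` of powers of `I`, so the ideals `(I^(c+m) : I)` lie in `I^m`. They form an
`I`-filtration below the `I`-adic one, which is therefore stable by Noetherianity; stability
gives `(I^(n+1) : I) = I • (I^n : I) ⊆ I^n` for large `n`. Iterating, `(I^(n+j) : I^j) = I^n`
for large `n` and all `j`, and the terms of the Ratliff–Rush chain of `I^n` are of this form.
-/

namespace Ideal

variable {R : Type*} [CommRing R]

theorem le_colon_iff_mul_le {J K L : Ideal R} : L ≤ K.colon J ↔ L * J ≤ K := by
  rw [Submodule.mul_le]
  simp only [SetLike.le_def, Submodule.mem_colon, smul_eq_mul, SetLike.mem_coe]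

theorem colon_mul_le (J K : Ideal R) : K.colon J * J ≤ K :=
  le_colon_iff_mul_le.mp le_rfl

theorem colon_mul (J J' K : Ideal R) : K.colon ↑(J * J') = (K.colon J').colon J :=
  eq_of_forall_le_iff fun L => by simp only [le_colon_iff_mul_le, mul_assoc]

theorem exists_mem_pow_sub_of_mul_mem_pow [IsNoetherianRing R] (I : Ideal R) {r : R}
    (hr : r ∈ nonZeroDivisors R) :
    ∃ c : ℕ, ∀ n ≥ c, ∀ x : R, r * x ∈ I ^ n → x ∈ I ^ (n - c) := by
  obtain ⟨c, hc⟩ := exists_pow_inf_eq_pow_smul I (Submodule.span R {r})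
  refine ⟨c, fun n hn x hx => ?_⟩
  have hrx : r * x ∈ I ^ n • (⊤ : Submodule R R) ⊓ Submodule.span R {r} := by
    rw [smul_eq_mul, mul_top]
    exact ⟨hx, Submodule.mem_span_singleton.mpr ⟨x, mul_comm x r⟩⟩
  rw [hc n hn] at hrx
  obtain ⟨a, ha, hax⟩ :=
    Submodule.mem_smul_span_singleton.mp (Submodule.smul_mono le_rfl inf_le_right hrx)
  rw [smul_eq_mul, mul_comm, mul_cancel_left_mem_nonZeroDivisors hr] at hax
  exact hax ▸ ha

theorem exists_colon_pow_succ_eq_pow [IsNoetherianRing R] {I : Ideal R}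
    (hreg : ∃ r ∈ I, r ∈ nonZeroDivisors R) :
    ∃ N : ℕ, ∀ n ≥ N, (I ^ (n + 1)).colon I = I ^ n := by
  obtain ⟨r, hrI, hr⟩ := hreg
  obtain ⟨c, hc⟩ := exists_mem_pow_sub_of_mul_mem_pow I hr
  let F : I.Filtration R :=
    { N := fun m => (I ^ (c + m)).colon I
      mono := fun m => Submodule.colon_mono (pow_le_pow_right (by omega)) subset_rfl
      smul_le := fun m => by
        rw [smul_eq_mul, le_colon_iff_mul_le, mul_assoc, ← add_assoc, pow_succ']
        exact mul_mono_right (colon_mul_le _ _) }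
  have hF : F ≤ I.stableFiltration ⊤ := fun m x hx => by
    change x ∈ I ^ m • ⊤
    rw [smul_eq_mul, mul_top]
    simpa using hc (c + m) (by omega) x (mul_comm r x ▸ Submodule.mem_colon.mp hx r hrI)
  obtain ⟨n₀, hn₀⟩ := (I.stableFiltration_stable ⊤).of_le hF
  refine ⟨c + n₀, fun n hn => le_antisymm ?_ (le_colon_iff_mul_le.mpr (pow_succ I n).ge)⟩
  obtain ⟨m, rfl⟩ : ∃ m, n = c + m := ⟨n - c, by omega⟩
  calc (I ^ (c + m + 1)).colon I = I • F.N m := (hn₀ m (by omega)).symm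
    _ ≤ I ^ (c + m) := by rw [smul_eq_mul, mul_comm]; exact colon_mul_le _ _

theorem exists_colon_pow_add_eq_pow [IsNoetherianRing R] {I : Ideal R}
    (hreg : ∃ r ∈ I, r ∈ nonZeroDivisors R) :
    ∃ N : ℕ, ∀ n ≥ N, ∀ j : ℕ, (I ^ (n + j)).colon ↑(I ^ j) = I ^ n := by
  obtain ⟨N, hN⟩ := exists_colon_pow_succ_eq_pow hreg
  refine ⟨N, fun n hn j => ?_⟩
  induction j with
  | zero => simp [one_eq_top, Submodule.colon_univ]
  | succ j ih => rw [pow_succ, colon_mul, ← add_assoc, hN _ (by omega), ih]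

end Ideal

/-- If `I` is an ideal containing a regular element in a Noetherian ring `R`, then for all
sufficiently large `n`, the power `I^n` is Ratliff–Rush closed. -/
theorem ratliffRush_pow_eq_pow {R : Type*} [CommRing R] [IsNoetherianRing R]
    (I : Ideal R) (hreg : ∃ r ∈ I, r ∈ nonZeroDivisors R) :
    ∃ N : ℕ, ∀ n ≥ N, ratliffRushClosure (I ^ n) = I ^ n := by
  obtain ⟨N, hN⟩ := Ideal.exists_colon_pow_add_eq_pow hreg
  refine ⟨N, fun n hn => ?_⟩
  have hterm : ∀ k : ℕ, ((I ^ n) ^ (k + 1)).colon ↑((I ^ n) ^ k) = I ^ n := fun k => by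
    rw [← pow_mul, ← pow_mul, mul_add, mul_one, add_comm]
    exact hN n hn (n * k)
  simp only [ratliffRushClosure, hterm, ciSup_const]
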